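/- arXiv:2103.08711 — 6 statements merged into one kernel-verified Lean document; each statement's English description precedes it below -/
import Mathlib

section
/- Let Φ ∈ ℝ^{M×N} satisfy the null space condition and have pairwise distinct columns (φ_n ≠ φ_{n'} for all n ≠ n' in {1,…,N}). Let λ, λ' ∈ ℝ^N be entrywise nonnegative. If P(C_u|λ) = P(C_u|λ') for every u ∈ ℤ₊^N, then λ = λ'. -/
open scoped BigOperators

/-- Poisson probability mass `P(x|λ) = ∏ n, e^{-λ_n} λ_n^{x_n} / x_n!`. -/
noncomputable def poissonPMF {N : ℕ} (lam : Fin N → ℝ) (x : Fin N → ℕ) : ℝ :=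
  ∏ n, Real.exp (-lam n) * lam n ^ x n / (Nat.factorial (x n) : ℝ)

/-- Collision set `C_u = {x ∈ ℤ₊^N : Φx = Φu}`. -/
def collisionSet {M N : ℕ} (Φ : Matrix (Fin M) (Fin N) ℝ) (u : Fin N → ℕ) :
    Set (Fin N → ℕ) :=
  {x | Φ.mulVec (fun n => (x n : ℝ)) = Φ.mulVec (fun n => (u n : ℝ))}

/-- Probability mass of a collision set, `P(C_u|λ) = Σ_{x ∈ C_u} P(x|λ)`. -/
noncomputable def collisionMass {M N : ℕ} (Φ : Matrix (Fin M) (Fin N) ℝ)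
    (u : Fin N → ℕ) (lam : Fin N → ℝ) : ℝ :=
  ∑' x : collisionSet Φ u, poissonPMF lam (x : Fin N → ℕ)


/-! By the null space condition and Hahn–Banach, some linear functional `f` is positive on all
columns of `Φ`. The weight `∑ n, x n * f (Φ.col n) = f (Φ *ᵥ x)` is constant on collision sets,
so they are finite and `P(C_u|λ) = exp (-∑ λ) * ∑_{x ∈ C_u} λ^x / x!`. Since `C_0 = {0}`, the
case `u = 0` gives `∑ λ = ∑ λ'`. For `u = e_n`, distinct columns force every `x ∈ C_{e_n}` other
than `e_n` to be supported on columns of strictly smaller weight, so the equations form a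
triangular system in `λ`, solved by induction along the weights. -/

open Matrix Finset

theorem exists_strongDual_forall_pos_of_sum_smul_eq_zero {ι E : Type*} [Fintype ι]
    [AddCommGroup E] [Module ℝ E] [TopologicalSpace E] [IsTopologicalAddGroup E]
    [ContinuousSMul ℝ E] [LocallyConvexSpace ℝ E] [T2Space E] (v : ι → E)
    (hv : ∀ w : ι → ℝ, (∀ i, 0 ≤ w i) → ∑ i, w i • v i = 0 → w = 0) :
    ∃ f : StrongDual ℝ E, ∀ i, 0 < f (v i) := by
  classical
  set K := Fintype.linearCombination ℝ v '' stdSimplex ℝ ι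
  have hK : (0 : E) ∉ K := by
    rintro ⟨w, ⟨hw₀, hw₁⟩, hw⟩
    rw [Fintype.linearCombination_apply] at hw
    simp [hv w hw₀ hw] at hw₁
  obtain ⟨f, c, hf0, hfK⟩ := geometric_hahn_banach_point_closed
    ((convex_stdSimplex ℝ ι).linear_image _)
    ((isCompact_stdSimplex ℝ ι).image (LinearMap.continuous_on_pi _)).isClosed hK
  refine ⟨f, fun i => ?_⟩
  have hvi : v i ∈ K := ⟨Pi.single i 1, single_mem_stdSimplex ℝ i, by simp⟩
  simpa using hf0.trans (hfK _ hvi)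

theorem Matrix.exists_strongDual_forall_col_pos {m n : Type*} [Fintype m] [Fintype n]
    (Φ : Matrix m n ℝ) (hns : ∀ v : n → ℝ, (∀ j, 0 ≤ v j) → Φ *ᵥ v = 0 → v = 0) :
    ∃ f : StrongDual ℝ (m → ℝ), ∀ j, 0 < f (Φ.col j) :=
  exists_strongDual_forall_pos_of_sum_smul_eq_zero Φ.col fun w hw₀ hw =>
    hns w hw₀ (by simpa [mulVec_eq_sum, col_def] using hw)

theorem Matrix.map_mulVec {m n : Type*} [Fintype n] (Φ : Matrix m n ℝ)
    (f : (m → ℝ) →ₗ[ℝ] ℝ) (w : n → ℝ) : f (Φ *ᵥ w) = ∑ j, w j * f (Φ.col j) := by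
  simp [mulVec_eq_sum, map_sum, col]

theorem finite_setOf_sum_natCast_mul_le {ι : Type*} [Fintype ι] {a : ι → ℝ}
    (ha : ∀ i, 0 < a i) (c : ℝ) : {x : ι → ℕ | ∑ i, (x i : ℝ) * a i ≤ c}.Finite := by
  classical
  refine (Set.finite_Iic fun i => ⌈c / a i⌉₊).subset fun x hx i => ?_
  have hxi : (x i : ℝ) * a i ≤ c :=
    (single_le_sum (fun j _ => mul_nonneg (Nat.cast_nonneg _) (ha j).le) (mem_univ i)).trans hx
  exact Nat.cast_le.mp (((le_div_iff₀ (ha i)).2 hxi).trans (Nat.le_ceil _))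

theorem lt_of_sum_natCast_mul_eq {ι : Type*} [Fintype ι] [DecidableEq ι] {a : ι → ℝ}
    (ha : ∀ i, 0 < a i) {x : ι → ℕ} {m n : ι} (hx : ∑ i, (x i : ℝ) * a i = a n)
    (hm : x m ≠ 0) (hxm : x ≠ Pi.single m 1) : a m < a n := by
  have hterm : ∀ i, 0 ≤ (x i : ℝ) * a i := fun i => mul_nonneg (Nat.cast_nonneg _) (ha i).le
  have hsplit := add_sum_erase univ (fun i => (x i : ℝ) * a i) (mem_univ m)
  have hxm_ge : a m ≤ (x m : ℝ) * a m :=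
    le_mul_of_one_le_left (ha m).le (Nat.one_le_cast.mpr (Nat.one_le_iff_ne_zero.mpr hm))
  have hrest := sum_nonneg fun i (_ : i ∈ univ.erase m) => hterm i
  refine lt_of_le_of_ne (by linarith) fun hmn => hxm ?_
  -- with `a m = a n`, the term `x m * a m` alone already exhausts the total weight
  have hxm_one : x m = 1 := by
    have hle : (x m : ℝ) ≤ 1 :=
      le_of_mul_le_mul_right (by linarith : (x m : ℝ) * a m ≤ 1 * a m) (ha m)
    exact le_antisymm (by exact_mod_cast hle) (Nat.one_le_iff_ne_zero.mpr hm)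
  have hzero := (sum_eq_zero_iff_of_nonneg fun i _ => hterm i).mp
    (by rw [hxm_one] at hsplit; linarith)
  ext i
  rcases eq_or_ne i m with rfl | hi
  · simp [hxm_one]
  · simpa [hi, (ha i).ne'] using hzero i (mem_erase.mpr ⟨hi, mem_univ i⟩)

theorem natCast_piSingle_one {ι : Type*} [DecidableEq ι] (i : ι) :
    (fun k => ((Pi.single i 1 : ι → ℕ) k : ℝ)) = Pi.single i 1 := by
  ext k
  rcases eq_or_ne k i with rfl | hk <;> simp [*]

section Collision

variable {M N : ℕ} (Φ : Matrix (Fin M) (Fin N) ℝ)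

theorem collisionSet_zero (hns : ∀ v : Fin N → ℝ, (∀ n, 0 ≤ v n) → Φ *ᵥ v = 0 → v = 0) :
    collisionSet Φ 0 = {0} := by
  ext x
  simp only [collisionSet, Set.mem_ofPred_eq, Set.mem_singleton_iff, Pi.zero_apply,
    Nat.cast_zero]
  refine ⟨fun hx => ?_, fun hx => by simp [hx]⟩
  have := hns _ (fun n => Nat.cast_nonneg (x n)) (hx.trans Φ.mulVec_zero)
  ext n
  simpa using congrFun this n

theorem sum_natCast_mul_eq_of_mem_collisionSet (f : (Fin M → ℝ) →ₗ[ℝ] ℝ) {u x : Fin N → ℕ}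
    (hx : x ∈ collisionSet Φ u) :
    ∑ n, (x n : ℝ) * f (Φ.col n) = ∑ n, (u n : ℝ) * f (Φ.col n) := by
  rw [← Φ.map_mulVec, ← Φ.map_mulVec]
  exact congrArg f hx

theorem collisionSet_finite (f : (Fin M → ℝ) →ₗ[ℝ] ℝ) (hf : ∀ n, 0 < f (Φ.col n))
    (u : Fin N → ℕ) : (collisionSet Φ u).Finite :=
  (finite_setOf_sum_natCast_mul_le hf _).subset fun _ hx =>
    (sum_natCast_mul_eq_of_mem_collisionSet Φ f hx).le

theorem eq_of_single_mem_collisionSet_single (hcols : Function.Injective Φ.col) {m n : Fin N}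
    (h : Pi.single m 1 ∈ collisionSet Φ (Pi.single n 1)) : m = n := by
  apply hcols
  simpa only [collisionSet, Set.mem_ofPred_eq, natCast_piSingle_one, mulVec_single_one] using h

theorem lt_of_mem_collisionSet_single (hcols : Function.Injective Φ.col)
    (f : (Fin M → ℝ) →ₗ[ℝ] ℝ) (hf : ∀ n, 0 < f (Φ.col n)) {n m : Fin N} {x : Fin N → ℕ}
    (hx : x ∈ collisionSet Φ (Pi.single n 1)) (hxn : x ≠ Pi.single n 1) (hm : x m ≠ 0) :
    f (Φ.col m) < f (Φ.col n) := by
  refine lt_of_sum_natCast_mul_eq hf ?_ hm fun hxm => hxn ?_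
  · simpa [Pi.single_apply] using sum_natCast_mul_eq_of_mem_collisionSet Φ f hx
  · subst hxm
    rw [eq_of_single_mem_collisionSet_single Φ hcols hx]

end Collision

noncomputable def poissonMonomial {ι : Type*} [Fintype ι] (lam : ι → ℝ) (x : ι → ℕ) : ℝ :=
  ∏ i, lam i ^ x i / (x i).factorial

theorem poissonPMF_eq_exp_mul_poissonMonomial {N : ℕ} (lam : Fin N → ℝ) (x : Fin N → ℕ) :
    poissonPMF lam x = Real.exp (-∑ n, lam n) * poissonMonomial lam x := by
  simp only [poissonPMF, poissonMonomial, mul_div_assoc, prod_mul_distrib, ← Real.exp_sum,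
    sum_neg_distrib]

theorem poissonMonomial_congr {ι : Type*} [Fintype ι] {lam lam' : ι → ℝ} {x : ι → ℕ}
    (h : ∀ i, x i ≠ 0 → lam i = lam' i) : poissonMonomial lam x = poissonMonomial lam' x := by
  refine prod_congr rfl fun i _ => ?_
  rcases eq_or_ne (x i) 0 with hi | hi
  · simp [hi]
  · rw [h i hi]

theorem poissonMonomial_single {ι : Type*} [Fintype ι] [DecidableEq ι] (lam : ι → ℝ) (i : ι) :
    poissonMonomial lam (Pi.single i 1) = lam i := by
  rw [poissonMonomial, prod_eq_single i (fun j _ hj => by simp [hj]) (by simp)]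
  simp

theorem collisionMass_eq_exp_mul_sum {M N : ℕ} {Φ : Matrix (Fin M) (Fin N) ℝ} {u : Fin N → ℕ}
    {S : Finset (Fin N → ℕ)} (hS : (S : Set (Fin N → ℕ)) = collisionSet Φ u) (lam : Fin N → ℝ) :
    collisionMass Φ u lam = Real.exp (-∑ n, lam n) * ∑ x ∈ S, poissonMonomial lam x := by
  rw [collisionMass, ← hS, tsum_subtype', mul_sum]
  exact sum_congr rfl fun x _ => poissonPMF_eq_exp_mul_poissonMonomial lam x

theorem eq_of_sum_poissonMonomial_eq {ι α : Type*} [Fintype ι] [DecidableEq ι] [LinearOrder α]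
    {a : ι → α} {S : ι → Finset (ι → ℕ)} {lam lam' : ι → ℝ}
    (hS : ∀ i, Pi.single i 1 ∈ S i)
    (hlt : ∀ i, ∀ x ∈ S i, x ≠ Pi.single i 1 → ∀ j, x j ≠ 0 → a j < a i)
    (h : ∀ i, ∑ x ∈ S i, poissonMonomial lam x = ∑ x ∈ S i, poissonMonomial lam' x) :
    lam = lam' := by
  -- at a disagreement of minimal weight, the `i`-th equation reduces to `lam i = lam' i`
  by_contra hne
  obtain ⟨i, hi, hmin⟩ := (univ.filter fun i => lam i ≠ lam' i).exists_min_image a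
    (by simpa [filter_nonempty_iff, funext_iff] using hne)
  have hbelow : ∀ j, a j < a i → lam j = lam' j := fun j hj => by
    by_contra h'
    exact (hmin j (mem_filter.mpr ⟨mem_univ j, h'⟩)).not_gt hj
  have hi' := h i
  rw [← add_sum_erase _ _ (hS i), ← add_sum_erase _ _ (hS i), poissonMonomial_single,
    poissonMonomial_single, sum_congr rfl fun x hx => poissonMonomial_congr fun j hj =>
      hbelow j (hlt i x (mem_erase.mp hx).2 (mem_erase.mp hx).1 j hj)] at hi'
  exact (mem_filter.mp hi).2 (add_right_cancel hi')

theorem stmt_0_general {M N : ℕ}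
    (Φ : Matrix (Fin M) (Fin N) ℝ)
    (hns : ∀ v : Fin N → ℝ, (∀ n, 0 ≤ v n) → Φ.mulVec v = 0 → v = 0)
    (hcols : ∀ n n' : Fin N, n ≠ n' → (fun m => Φ m n) ≠ (fun m => Φ m n'))
    (lam lam' : Fin N → ℝ)
    (h : ∀ u : Fin N → ℕ, collisionMass Φ u lam = collisionMass Φ u lam') :
    lam = lam' := by
  have hinj : Function.Injective Φ.col := fun n n' hn => by_contra fun hne => hcols n n' hne hn
  obtain ⟨f, hf⟩ := Φ.exists_strongDual_forall_col_pos hns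
  have hfin := collisionSet_finite Φ f.toLinearMap hf
  have hzero : (({0} : Finset (Fin N → ℕ)) : Set (Fin N → ℕ)) = collisionSet Φ 0 := by
    simp [collisionSet_zero Φ hns]
  have hsum : ∑ n, lam n = ∑ n, lam' n := by
    have h0 := h 0
    rw [collisionMass_eq_exp_mul_sum hzero, collisionMass_eq_exp_mul_sum hzero] at h0
    simpa [poissonMonomial] using h0
  refine eq_of_sum_poissonMonomial_eq (a := fun n => f (Φ.col n))
    (S := fun n => (hfin (Pi.single n 1)).toFinset) (fun n => (hfin _).mem_toFinset.mpr rfl)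
    (fun n x hx hxn m hm => lt_of_mem_collisionSet_single Φ hinj f.toLinearMap hf
      ((hfin _).mem_toFinset.mp hx) hxn hm) (fun n => ?_)
  have hn := h (Pi.single n 1)
  rw [collisionMass_eq_exp_mul_sum (hfin _).coe_toFinset,
    collisionMass_eq_exp_mul_sum (hfin _).coe_toFinset, hsum] at hn
  exact mul_left_cancel₀ (Real.exp_ne_zero _) hn

/-- identifiability of mixture weights under the null space condition
and pairwise distinct columns. -/
theorem stmt_0 {M N : ℕ}
    (Φ : Matrix (Fin M) (Fin N) ℝ)
    (hns : ∀ v : Fin N → ℝ, (∀ n, 0 ≤ v n) → Φ.mulVec v = 0 → v = 0)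
    (hcols : ∀ n n' : Fin N, n ≠ n' → (fun m => Φ m n) ≠ (fun m => Φ m n'))
    (lam lam' : Fin N → ℝ)
    (hlam : ∀ n, 0 ≤ lam n) (hlam' : ∀ n, 0 ≤ lam' n)
    (h : ∀ u : Fin N → ℕ, collisionMass Φ u lam = collisionMass Φ u lam') :
    lam = lam' :=
  stmt_0_general Φ hns hcols lam lam' h
end

section
/- Let M, N ≥ 1 and let μ be an atomless probability measure on ℝ. Then for almost every Φ ∈ ℝ^{M×N} with respect to the product measure μ^{⊗(M×N)} (entries i.i.d. from μ), the map x ↦ Φx is injective on ℤ₊^N: for all x, x' ∈ ℤ₊^N with Φx = Φx', one has x = x'. -/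
/-!
If `Φ x = Φ x'` with `x ≠ x'`, then every row of `Φ` lies on the hyperplane `{r | r ⬝ᵥ (x - x') = 0}`.
Choosing a coordinate `i` with `xᵢ ≠ x'ᵢ`, this hyperplane is, for fixed values of the other
coordinates, a single point in the `i`-th coordinate, so it is null because `μ` has no atoms.
Since there are only countably many pairs `(x, x')`, almost every `Φ` avoids all of them.
-/

open MeasureTheory

namespace MeasureTheory.Measure

variable {ι : Type*} [Fintype ι]

theorem pi_dotProduct_eq_null (μ : ι → Measure ℝ) [∀ i, SigmaFinite (μ i)] {v : ι → ℝ} {i : ι}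
    [NullSingletonClass (μ i)] (hv : v i ≠ 0) (c : ℝ) :
    Measure.pi μ {r | r ⬝ᵥ v = c} = 0 := by
  classical
  let p : ι → Prop := (· ≠ i)
  let e := MeasurableEquiv.piEquivPiSubtypeProd (fun _ : ι => ℝ) p
  let i' : {j // ¬ p j} := ⟨i, not_not.2 rfl⟩
  have hS : MeasurableSet {r : ι → ℝ | r ⬝ᵥ v = c} :=
    measurableSet_eq_fun (by unfold dotProduct; fun_prop) measurable_const
  rw [← ((measurePreserving_piEquivPiSubtypeProd μ p).symm e).measure_preimage
    hS.nullMeasurableSet, measure_prod_null (e.symm.measurable hS)]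
  refine .of_forall fun x => measure_mono_null ?_ (pi_hyperplane _ i' ((c - ∑ j, x j * v j) / v i))
  intro y hy
  have hsplit : e.symm (x, y) ⬝ᵥ v = ∑ j, x j * v j + y i' * v i := by
    rw [dotProduct, ← Fintype.sum_subtype_add_sum_subtype p]
    congr 1
    · exact Fintype.sum_congr _ _ fun j => by simp [e, j.2]
    · rw [Fintype.sum_eq_single i' fun j hj => absurd (Subtype.ext (not_not.1 j.2)) hj]
      simp [e, i', p]
  simp only [Set.mem_preimage, Set.mem_ofPred_eq, hsplit] at hy
  rw [Set.mem_ofPred_eq, eq_div_iff hv]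
  linarith

theorem ae_dotProduct_ne (μ : ι → Measure ℝ) [∀ i, SigmaFinite (μ i)] {v : ι → ℝ} {i : ι}
    [NullSingletonClass (μ i)] (hv : v i ≠ 0) (c : ℝ) :
    ∀ᵐ r ∂Measure.pi μ, r ⬝ᵥ v ≠ c :=
  compl_mem_ae_iff.2 (pi_dotProduct_eq_null μ hv c)

end MeasureTheory.Measure

namespace Matrix

open MeasureTheory.Measure

variable {m n : Type*} [Fintype m] [Fintype n]

theorem ae_mulVec_ne_zero [Nonempty m] (μ : m → n → Measure ℝ) [∀ i j, SigmaFinite (μ i j)]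
    [∀ i j, NullSingletonClass (μ i j)] {v : n → ℝ} (hv : v ≠ 0) :
    ∀ᵐ Φ ∂(Measure.pi fun i => Measure.pi (μ i)), Matrix.of Φ *ᵥ v ≠ 0 := by
  obtain ⟨j, hj⟩ := Function.ne_iff.1 hv
  let i : m := Classical.arbitrary m
  filter_upwards [tendsto_eval_ae_ae.eventually (ae_dotProduct_ne (μ i) hj 0)] with Φ hΦ hzero
  exact hΦ (congrFun hzero i)

theorem ae_injOn_mulVec [Nonempty m] (μ : m → n → Measure ℝ) [∀ i j, SigmaFinite (μ i j)]
    [∀ i j, NullSingletonClass (μ i j)] {S : Set (n → ℝ)} (hS : S.Countable) :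
    ∀ᵐ Φ ∂(Measure.pi fun i => Measure.pi (μ i)), S.InjOn (Matrix.of Φ).mulVec := by
  have hpair : ∀ x ∈ S, ∀ y ∈ S, ∀ᵐ Φ ∂(Measure.pi fun i => Measure.pi (μ i)),
      Matrix.of Φ *ᵥ x = Matrix.of Φ *ᵥ y → x = y := by
    intro x _ y _
    by_cases hxy : x = y
    · exact .of_forall fun _ _ => hxy
    · filter_upwards [ae_mulVec_ne_zero μ (sub_ne_zero.2 hxy)] with Φ hΦ h
      exact absurd (by rw [mulVec_sub, h, sub_self]) hΦ
  exact (ae_ball_iff hS).2 fun x hx => (ae_ball_iff hS).2 (hpair x hx)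

end Matrix

theorem stmt_1_general (M N : ℕ) (hM : 1 ≤ M)
    (μ : Measure ℝ) [IsProbabilityMeasure μ] [NullSingletonClass μ] :
    ∀ᵐ Φ ∂(Measure.pi fun _ : Fin M => Measure.pi fun _ : Fin N => μ),
      ∀ x x' : Fin N → ℕ,
        Matrix.mulVec (Matrix.of Φ) (fun n => (x n : ℝ))
          = Matrix.mulVec (Matrix.of Φ) (fun n => (x' n : ℝ)) → x = x' := by
  have : Nonempty (Fin M) := ⟨⟨0, hM⟩⟩
  let cast : (Fin N → ℕ) → Fin N → ℝ := fun x n => x n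
  have hcast : cast.Injective := fun x x' h => funext fun n => Nat.cast_injective (congrFun h n)
  filter_upwards [Matrix.ae_injOn_mulVec (fun _ _ => μ) (Set.countable_range cast)]
    with Φ hΦ x x' h
  exact hcast (hΦ (Set.mem_range_self x) (Set.mem_range_self x') h)

/-- for almost every matrix `Φ` with i.i.d. atomless entries,
the map `x ↦ Φx` is injective on `ℤ₊^N`. -/
theorem stmt_1 (M N : ℕ) (hM : 1 ≤ M) (hN : 1 ≤ N)
    (μ : Measure ℝ) [IsProbabilityMeasure μ] [NullSingletonClass μ] :
    ∀ᵐ Φ ∂(Measure.pi fun _ : Fin M => Measure.pi fun _ : Fin N => μ),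
      ∀ x x' : Fin N → ℕ,
        Matrix.mulVec (Matrix.of Φ) (fun n => (x n : ℝ))
          = Matrix.mulVec (Matrix.of Φ) (fun n => (x' n : ℝ)) → x = x' :=
  stmt_1_general M N hM μ
end

section
/- Let Φ ∈ ℝ^{M×N} be such that the map x ↦ Φx is injective on ℤ₊^N (for all x, x' ∈ ℤ₊^N, Φx = Φx' implies x = x'). Let λ, λ' ∈ ℝ^N be entrywise nonnegative. If P(C_u|λ) = P(C_u|λ') for every u ∈ ℤ₊^N, then λ = λ'. -/
open scoped BigOperators

lemma poisson_zero {N : ℕ} (lam : Fin N → ℝ) :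
    poissonPMF lam (fun _ => 0) = ∏ n, Real.exp (-lam n) := by
  unfold poissonPMF
  simp

lemma poisson_single {N : ℕ} (lam : Fin N → ℝ) (n : Fin N) :
    poissonPMF lam (fun m => if m = n then 1 else 0)
      = (∏ m, Real.exp (-lam m)) * lam n := by
  unfold poissonPMF
  have : ∀ m : Fin N,
      Real.exp (-lam m) * lam m ^ (if m = n then 1 else 0)
        / (Nat.factorial (if m = n then 1 else 0) : ℝ)
      = Real.exp (-lam m) * (if m = n then lam m else 1) := by
    intro m
    by_cases hm : m = n <;> simp [hm]
  simp only [this]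
  rw [Finset.prod_mul_distrib, Finset.prod_ite_eq' Finset.univ n (fun m => lam m)]
  simp

/-- identifiability when `x ↦ Φx` is injective on `ℤ₊^N`. -/
theorem stmt_2 {M N : ℕ}
    (Φ : Matrix (Fin M) (Fin N) ℝ)
    (hinj : ∀ x x' : Fin N → ℕ,
      Φ.mulVec (fun n => (x n : ℝ)) = Φ.mulVec (fun n => (x' n : ℝ)) → x = x')
    (lam lam' : Fin N → ℝ)
    (hlam : ∀ n, 0 ≤ lam n) (hlam' : ∀ n, 0 ≤ lam' n)
    (h : ∀ u : Fin N → ℕ, collisionMass Φ u lam = collisionMass Φ u lam') :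
    lam = lam' := by
  have hset : ∀ u : Fin N → ℕ, collisionSet Φ u = {u} := by
    intro u
    ext x
    constructor
    · intro hx; exact hinj x u hx
    · intro hx; simp only [Set.mem_singleton_iff] at hx; subst hx; rfl
  have hmass : ∀ (mu : Fin N → ℝ) (u : Fin N → ℕ),
      collisionMass Φ u mu = poissonPMF mu u := by
    intro mu u
    unfold collisionMass
    rw [hset u]
    exact tsum_singleton u (poissonPMF mu)
  have hp : ∀ u : Fin N → ℕ, poissonPMF lam u = poissonPMF lam' u := by
    intro u
    have := h u
    rwa [hmass, hmass] at this
  have h0 : (∏ n, Real.exp (-lam n)) = ∏ n, Real.exp (-lam' n) := by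
    have := hp (fun _ => 0)
    rwa [poisson_zero, poisson_zero] at this
  have hCpos : 0 < ∏ n : Fin N, Real.exp (-lam n) :=
    Finset.prod_pos fun n _ => Real.exp_pos _
  funext n
  have := hp (fun m => if m = n then 1 else 0)
  rw [poisson_single, poisson_single, ← h0] at this
  exact mul_left_cancel₀ (ne_of_gt hCpos) this
end

section
/- Let N ≥ 1, σ > 0, let φ_0 = 0 and φ_1, …, φ_N ∈ ℝ^M, and let K be the (N+1)×(N+1) matrix with entries K_{n,n'} = exp(−‖φ_n − φ_{n'}‖²/(4σ²)). Let λ* ∈ ℝ^{N+1} be a probability vector. Suppose K is invertible, every entry of the vector K^{-1}𝟙 is nonzero (𝟙 the all-ones vector), and λ̃ maximizes the Jensen-bound objective f over S with all entries of λ̃ strictly positive. Then there exists c > 0 such that λ̃ = c · K^{-1}( λ* / (K^{-1}𝟙) ), where the division of vectors is elementwise. -/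
/-!
At an interior maximizer `λ̃` of `f` on `S`, moving mass between two coordinates keeps the point
in `S`, so the derivative of `f` along `e_i - e_j` vanishes: with `a = Kλ̃`, the vector
`(λ*/a)ᵀ K` is constant, say `α 𝟙`. As `K` is symmetric this reads `λ*/a = α K⁻¹𝟙`, hence
`λ*/(K⁻¹𝟙) = α a` and `K⁻¹(λ*/(K⁻¹𝟙)) = α λ̃`. Pairing `(λ*/a)ᵀ K = α 𝟙ᵀ` with `λ̃` gives
`1 = Σ λ* = α Σ λ̃`, so `α > 0` and `c = Σ λ̃`.
-/

open Matrix Filter Topology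

section JensenBound

variable {ι : Type*} [Fintype ι]

noncomputable def jensenObjective (K : Matrix ι ι ℝ) (w lam : ι → ℝ) : ℝ :=
  ∑ n, w n * Real.log ((K *ᵥ lam) n)

variable (ι) in
def subSimplex : Set (ι → ℝ) :=
  {lam | (∀ n, 0 ≤ lam n) ∧ ∑ n, lam n ≤ 1}

theorem hasDerivAt_jensenObjective_add_smul {K : Matrix ι ι ℝ} {w x : ι → ℝ}
    (hKx : ∀ n, (K *ᵥ x) n ≠ 0) (v : ι → ℝ) :
    HasDerivAt (fun t : ℝ => jensenObjective K w (x + t • v))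
      ((w / K *ᵥ x) ⬝ᵥ (K *ᵥ v)) 0 := by
  have hline : (fun t : ℝ => jensenObjective K w (x + t • v)) =
      fun t => ∑ n, w n * Real.log ((K *ᵥ x) n + t * (K *ᵥ v) n) := by
    funext t
    simp only [jensenObjective, mulVec_add, mulVec_smul, Pi.add_apply, Pi.smul_apply, smul_eq_mul]
  rw [hline]
  have hderiv : ∀ n, HasDerivAt (fun t : ℝ => w n * Real.log ((K *ᵥ x) n + t * (K *ᵥ v) n))
      (w n / (K *ᵥ x) n * (K *ᵥ v) n) 0 := fun n => by
    have hlin : HasDerivAt (fun t : ℝ => (K *ᵥ x) n + t * (K *ᵥ v) n) ((K *ᵥ v) n) 0 := by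
      simpa using ((hasDerivAt_id (0 : ℝ)).mul_const ((K *ᵥ v) n)).const_add ((K *ᵥ x) n)
    refine ((hlin.log (by simpa using hKx n)).const_mul (w n)).congr_deriv ?_
    rw [zero_mul, add_zero]
    ring
  simpa [dotProduct] using HasDerivAt.fun_sum fun n _ => hderiv n

theorem eventually_add_smul_mem_subSimplex {x : ι → ℝ} (hx : ∀ n, 0 < x n)
    (hsum : ∑ n, x n ≤ 1) {v : ι → ℝ} (hv : ∑ n, v n = 0) :
    ∀ᶠ t in 𝓝 (0 : ℝ), x + t • v ∈ subSimplex ι := by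
  have hpos : ∀ n, ∀ᶠ t in 𝓝 (0 : ℝ), 0 < x n + t * v n := fun n => by
    refine Tendsto.eventually_const_lt (hx n) ?_
    have hline : Continuous fun t : ℝ => x n + t * v n := by fun_prop
    simpa using hline.tendsto 0
  filter_upwards [eventually_all.2 hpos] with t ht
  refine ⟨fun n => (ht n).le, ?_⟩
  simpa [Finset.sum_add_distrib, ← Finset.mul_sum, hv] using hsum

theorem dotProduct_div_mulVec_eq_zero_of_isMaxOn {K : Matrix ι ι ℝ} {w x : ι → ℝ}
    (hmax : IsMaxOn (jensenObjective K w) (subSimplex ι) x) (hx : ∀ n, 0 < x n)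
    (hsum : ∑ n, x n ≤ 1) (hKx : ∀ n, (K *ᵥ x) n ≠ 0) {v : ι → ℝ} (hv : ∑ n, v n = 0) :
    (w / K *ᵥ x) ⬝ᵥ (K *ᵥ v) = 0 := by
  refine IsLocalMax.hasDerivAt_eq_zero ?_ (hasDerivAt_jensenObjective_add_smul hKx v)
  filter_upwards [eventually_add_smul_mem_subSimplex hx hsum hv] with t ht
  simpa using hmax ht

theorem eq_of_dotProduct_eq_zero_of_sum_eq_zero [DecidableEq ι] {y : ι → ℝ}
    (h : ∀ v : ι → ℝ, ∑ n, v n = 0 → y ⬝ᵥ v = 0) (i j : ι) : y i = y j := by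
  have := h (Pi.single i 1 - Pi.single j 1) (by simp [Finset.sum_sub_distrib])
  rw [dotProduct_sub, dotProduct_single, dotProduct_single] at this
  linarith

theorem vecMul_div_mulVec_eq_of_isMaxOn {K : Matrix ι ι ℝ} {w x : ι → ℝ}
    (hmax : IsMaxOn (jensenObjective K w) (subSimplex ι) x) (hx : ∀ n, 0 < x n)
    (hsum : ∑ n, x n ≤ 1) (hKx : ∀ n, (K *ᵥ x) n ≠ 0) (i j : ι) :
    ((w / K *ᵥ x) ᵥ* K) i = ((w / K *ᵥ x) ᵥ* K) j := by
  classical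
  refine eq_of_dotProduct_eq_zero_of_sum_eq_zero (fun v hv => ?_) i j
  rw [← dotProduct_mulVec]
  exact dotProduct_div_mulVec_eq_zero_of_isMaxOn hmax hx hsum hKx hv

theorem sum_eq_mul_sum_of_vecMul_div_mulVec_eq_const {K : Matrix ι ι ℝ} {w x : ι → ℝ} {α : ℝ}
    (hKx : ∀ n, (K *ᵥ x) n ≠ 0) (hu : (w / K *ᵥ x) ᵥ* K = fun _ => α) :
    ∑ n, w n = α * ∑ n, x n := by
  calc ∑ n, w n = (w / K *ᵥ x) ⬝ᵥ (K *ᵥ x) := by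
        simp only [dotProduct, Pi.div_apply, div_mul_cancel₀ _ (hKx _)]
    _ = α * ∑ n, x n := by
        rw [dotProduct_mulVec, hu, Finset.mul_sum]
        rfl

theorem inv_mulVec_div_eq_smul_of_vecMul_div_mulVec_eq_const [DecidableEq ι]
    {K : Matrix ι ι ℝ} (hK : K.IsSymm) (hdet : IsUnit K.det)
    (hb : ∀ n, (K⁻¹ *ᵥ fun _ => (1 : ℝ)) n ≠ 0) {w x : ι → ℝ} {α : ℝ}
    (hKx : ∀ n, (K *ᵥ x) n ≠ 0) (hu : (w / K *ᵥ x) ᵥ* K = fun _ => α) :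
    K⁻¹ *ᵥ (w / K⁻¹ *ᵥ fun _ => 1) = α • x := by
  have hinv : ∀ v, K⁻¹ *ᵥ (K *ᵥ v) = v := fun v => by
    rw [mulVec_mulVec, nonsing_inv_mul K hdet, one_mulVec]
  have hratio : w / K *ᵥ x = α • K⁻¹ *ᵥ fun _ => 1 := by
    rw [← hinv (w / K *ᵥ x), ← vecMul_transpose K, hK.eq, hu, ← mulVec_smul]
    congr 1
    funext n
    simp
  have hweights : w / (K⁻¹ *ᵥ fun _ => 1) = α • K *ᵥ x := by
    funext n
    have := congrFun hratio n
    simp only [Pi.div_apply, Pi.smul_apply, smul_eq_mul] at this ⊢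
    rw [div_eq_iff (hKx n)] at this
    rw [this]
    field_simp [hb n]
  rw [hweights, mulVec_smul, hinv]

end JensenBound

theorem stmt_3_general (M N : ℕ) (σ : ℝ)
    (φ : Fin (N + 1) → EuclideanSpace ℝ (Fin M))
    (K : Matrix (Fin (N + 1)) (Fin (N + 1)) ℝ)
    (hK : ∀ n n', K n n' = Real.exp (-(‖φ n - φ n'‖ ^ 2) / (4 * σ ^ 2)))
    (lamStar : Fin (N + 1) → ℝ)
    (hlamStar_sum : ∑ n, lamStar n = 1)
    (hKinv : IsUnit K.det)
    (hone : ∀ n, K⁻¹.mulVec (fun _ => (1 : ℝ)) n ≠ 0)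
    (lamT : Fin (N + 1) → ℝ)
    (hlamT_mem : (∀ n, 0 ≤ lamT n) ∧ ∑ n, lamT n ≤ 1)
    (hmax : ∀ lam : Fin (N + 1) → ℝ, (∀ n, 0 ≤ lam n) → ∑ n, lam n ≤ 1 →
      ∑ n, lamStar n * Real.log (K.mulVec lam n)
        ≤ ∑ n, lamStar n * Real.log (K.mulVec lamT n))
    (hposT : ∀ n, 0 < lamT n) :
    ∃ c : ℝ, 0 < c ∧
      lamT = c • K⁻¹.mulVec
        (fun n => lamStar n / K⁻¹.mulVec (fun _ => (1 : ℝ)) n) := by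
  have hKsymm : K.IsSymm := IsSymm.ext fun n n' => by rw [hK, hK, norm_sub_rev]
  have hKx : ∀ n, (K *ᵥ lamT) n ≠ 0 := fun n =>
    (Finset.sum_pos (fun m _ => mul_pos (by rw [hK]; exact Real.exp_pos _) (hposT m))
      Finset.univ_nonempty).ne'
  have hmaxOn : IsMaxOn (jensenObjective K lamStar) (subSimplex _) lamT :=
    fun lam hlam => hmax lam hlam.1 hlam.2
  set α := ((lamStar / K *ᵥ lamT) ᵥ* K) 0
  have hu : (lamStar / K *ᵥ lamT) ᵥ* K = fun _ => α :=
    funext fun i => vecMul_div_mulVec_eq_of_isMaxOn hmaxOn hposT hlamT_mem.2 hKx i 0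
  have hα : α * ∑ n, lamT n = 1 := by
    rw [← hlamStar_sum, sum_eq_mul_sum_of_vecMul_div_mulVec_eq_const hKx hu]
  refine ⟨∑ n, lamT n, Finset.sum_pos (fun n _ => hposT n) Finset.univ_nonempty, ?_⟩
  change lamT = _ • K⁻¹ *ᵥ (lamStar / K⁻¹ *ᵥ fun _ => 1)
  rw [inv_mulVec_div_eq_smul_of_vecMul_div_mulVec_eq_const hKsymm hKinv hone hKx hu, smul_smul,
    mul_comm, hα, one_smul]

/-- characterization of the maximizer of the Jensen bound for a
single sensor group under AWGN. -/
theorem stmt_3 (M N : ℕ) (hN : 1 ≤ N) (σ : ℝ) (hσ : 0 < σ)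
    (φ : Fin (N + 1) → EuclideanSpace ℝ (Fin M)) (hφ0 : φ 0 = 0)
    (K : Matrix (Fin (N + 1)) (Fin (N + 1)) ℝ)
    (hK : ∀ n n', K n n' = Real.exp (-(‖φ n - φ n'‖ ^ 2) / (4 * σ ^ 2)))
    (lamStar : Fin (N + 1) → ℝ)
    (hlamStar_nonneg : ∀ n, 0 ≤ lamStar n) (hlamStar_sum : ∑ n, lamStar n = 1)
    (hKinv : IsUnit K.det)
    (hone : ∀ n, K⁻¹.mulVec (fun _ => (1 : ℝ)) n ≠ 0)
    (lamT : Fin (N + 1) → ℝ)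
    (hlamT_mem : (∀ n, 0 ≤ lamT n) ∧ ∑ n, lamT n ≤ 1)
    (hmax : ∀ lam : Fin (N + 1) → ℝ, (∀ n, 0 ≤ lam n) → ∑ n, lam n ≤ 1 →
      ∑ n, lamStar n * Real.log (K.mulVec lam n)
        ≤ ∑ n, lamStar n * Real.log (K.mulVec lamT n))
    (hposT : ∀ n, 0 < lamT n) :
    ∃ c : ℝ, 0 < c ∧
      lamT = c • K⁻¹.mulVec
        (fun n => lamStar n / K⁻¹.mulVec (fun _ => (1 : ℝ)) n) :=
  stmt_3_general M N σ φ K hK lamStar hlamStar_sum hKinv hone lamT hlamT_mem hmax hposT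
end

section
/- Let Φ ∈ ℝ^{M×N} satisfy the null space condition, and let j ∈ {1,…,N} be an index whose one-hot collision set is trivial, C_{e_j} = {e_j}. Let λ, λ' ∈ ℝ^N be entrywise nonnegative with P(C_0|λ) = P(C_0|λ') and P(C_{e_j}|λ) = P(C_{e_j}|λ'). Then λ_j = λ'_j. -/
open scoped BigOperators

lemma mass_singleton {M N : ℕ} (Φ : Matrix (Fin M) (Fin N) ℝ) (u : Fin N → ℕ)
    (h : collisionSet Φ u = {u}) (lam : Fin N → ℝ) :
    collisionMass Φ u lam = poissonPMF lam u := by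
  rw [collisionMass, h, tsum_singleton]

/-- if the one-hot collision set `C_{e_j}` is trivial, the `j`-th
rates agree. -/
theorem stmt_6 {M N : ℕ}
    (Φ : Matrix (Fin M) (Fin N) ℝ)
    (hns : ∀ v : Fin N → ℝ, (∀ n, 0 ≤ v n) → Φ.mulVec v = 0 → v = 0)
    (j : Fin N)
    (hj : collisionSet Φ (Pi.single j 1) = {Pi.single j 1})
    (lam lam' : Fin N → ℝ)
    (hlam : ∀ n, 0 ≤ lam n) (hlam' : ∀ n, 0 ≤ lam' n)
    (h0 : collisionMass Φ 0 lam = collisionMass Φ 0 lam')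
    (hj' : collisionMass Φ (Pi.single j 1) lam = collisionMass Φ (Pi.single j 1) lam') :
    lam j = lam' j := by
  have h00 : collisionSet Φ (0 : Fin N → ℕ) = {0} := by
    ext x
    simp only [collisionSet, Set.mem_setOf_eq, Set.mem_singleton_iff]
    constructor
    · intro hx
      have hzero : (fun n => ((0 : Fin N → ℕ) n : ℝ)) = (0 : Fin N → ℝ) := by
        funext n; simp
      rw [hzero, Matrix.mulVec_zero] at hx
      have := hns (fun n => (x n : ℝ)) (fun n => Nat.cast_nonneg _) hx
      funext n
      have h := congrFun this n
      simpa using h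
    · rintro rfl; rfl
  have hp0 : ∀ μ : Fin N → ℝ, poissonPMF μ (0 : Fin N → ℕ) = ∏ n, Real.exp (-μ n) := by
    intro μ; simp [poissonPMF]
  have hpe : ∀ μ : Fin N → ℝ, poissonPMF μ (Pi.single j 1) =
      (∏ n, Real.exp (-μ n)) * μ j := by
    intro μ
    rw [poissonPMF]
    have : ∀ n, Real.exp (-μ n) * μ n ^ ((Pi.single j 1 : Fin N → ℕ) n) /
        (Nat.factorial ((Pi.single j 1 : Fin N → ℕ) n) : ℝ)
        = Real.exp (-μ n) * (μ n ^ ((Pi.single j 1 : Fin N → ℕ) n)) := by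
      intro n
      rcases eq_or_ne n j with rfl | hn
      · simp
      · simp [Pi.single_eq_of_ne hn]
    rw [Finset.prod_congr rfl (fun n _ => this n), Finset.prod_mul_distrib]
    congr 1
    rw [Finset.prod_eq_single j (fun n _ hn => by simp [Pi.single_eq_of_ne hn]) (by simp)]
    simp
  have hE := h0
  rw [collisionMass, collisionMass, h00, tsum_singleton, tsum_singleton, hp0, hp0] at hE
  rw [mass_singleton Φ _ hj, mass_singleton Φ _ hj, hpe, hpe, hE] at hj'
  have hEpos : (0:ℝ) < ∏ n, Real.exp (-lam' n) :=
    Finset.prod_pos (fun n _ => Real.exp_pos _)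
  exact mul_left_cancel₀ (ne_of_gt hEpos) hj'
end

section
/- Let Φ ∈ ℝ^{M×N} satisfy the null space condition and have pairwise distinct columns (φ_n ≠ φ_{n'} for all n ≠ n' in {1,…,N}). Then there exists j ∈ {1,…,N} such that the one-hot collision set is trivial: C_{e_j} = {e_j}. -/
open scoped BigOperators

/-! By Gordan's alternative (separate `0` from the compact convex set `Φ(Δ)`, `Δ` the standard
simplex) the null space condition yields `y` with weights `a := yᵀΦ` all positive, and
`a ⬝ᵥ x` is constant on every collision set. Take `j` with `a j` minimal: a point of
`C_{e_j}` then has total mass `1`, so it is some `e_k` with `φ_k = φ_j`, i.e. `k = j`. -/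

open Matrix Finset

theorem Matrix.exists_vecMul_pos {m n : Type*} [Fintype m] [Fintype n]
    (Φ : Matrix m n ℝ) (h : ∀ v : n → ℝ, (∀ j, 0 ≤ v j) → Φ *ᵥ v = 0 → v = 0) :
    ∃ y : m → ℝ, ∀ j, 0 < (y ᵥ* Φ) j := by
  classical
  set K := Φ.mulVecLin '' stdSimplex ℝ n
  have hK : IsClosed K :=
    ((isCompact_stdSimplex ℝ n).image Φ.mulVecLin.continuous_of_finiteDimensional).isClosed
  have h0 : (0 : m → ℝ) ∉ K := by
    rintro ⟨v, hv, hv0⟩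
    simpa [h v hv.1 hv0] using hv.2
  obtain ⟨f, u, hf0, hfK⟩ :=
    geometric_hahn_banach_point_closed ((convex_stdSimplex ℝ n).linear_image _) hK h0
  refine ⟨fun i => f (Pi.single i 1), fun j => ?_⟩
  have hcol : ((fun i => f (Pi.single i 1)) ᵥ* Φ) j = f (Φ *ᵥ Pi.single j 1) := by
    conv_rhs => rw [← univ_sum_single (Φ *ᵥ Pi.single j 1)]
    simp only [vecMul, dotProduct, map_sum, mulVec_single_one]
    refine sum_congr rfl fun i _ => ?_
    rw [mul_comm, ← smul_eq_mul, ← map_smul, ← Pi.single_smul', smul_eq_mul, mul_one, col_apply]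
  have hfj : u < f (Φ *ᵥ Pi.single j 1) := hfK _ ⟨_, single_mem_stdSimplex ℝ j, rfl⟩
  rw [map_zero] at hf0
  linarith

theorem Pi.natCast_single_one {ι R : Type*} [DecidableEq ι] [AddMonoidWithOne R] (j : ι) :
    (fun i => ((Pi.single j 1 : ι → ℕ) i : R)) = Pi.single j 1 :=
  funext fun i => by by_cases h : i = j <;> simp [h]

theorem exists_eq_single_of_sum_eq_one {ι : Type*} [Fintype ι] [DecidableEq ι] {x : ι → ℕ}
    (h : ∑ i, x i = 1) : ∃ k, x = Pi.single k 1 := by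
  obtain ⟨k, -, hk⟩ := exists_ne_zero_of_sum_ne_zero (h.trans_ne one_ne_zero)
  have hsplit : x k + ∑ i ∈ univ.erase k, x i = 1 := by rw [add_sum_erase _ _ (mem_univ k), h]
  have hrest := sum_eq_zero_iff.mp (show ∑ i ∈ univ.erase k, x i = 0 by omega)
  refine ⟨k, funext fun i => ?_⟩
  by_cases hi : i = k
  · subst hi; rw [Pi.single_eq_same]; omega
  · simp [hi, hrest i (mem_erase.mpr ⟨hi, mem_univ i⟩)]

theorem sum_eq_one_of_dotProduct_eq_min {ι : Type*} [Fintype ι] {a : ι → ℝ} {j : ι}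
    (hpos : 0 < a j) (hmin : ∀ i, a j ≤ a i) {x : ι → ℕ}
    (hx : a ⬝ᵥ (fun i => (x i : ℝ)) = a j) : ∑ i, x i = 1 := by
  have hle : a j * ∑ i, (x i : ℝ) ≤ a j := by
    calc a j * ∑ i, (x i : ℝ) = ∑ i, a j * x i := mul_sum _ _ _
      _ ≤ ∑ i, a i * x i := sum_le_sum fun i _ => by gcongr; exact hmin i
      _ = a j := hx
  have hle_one : ∑ i, x i ≤ 1 := by
    have : ∑ i, (x i : ℝ) ≤ 1 := (mul_le_iff_le_one_right hpos).mp hle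
    exact_mod_cast this
  have hne_zero : ∑ i, x i ≠ 0 := by
    intro h0
    have hx0 : (fun i => (x i : ℝ)) = 0 := funext fun i => by simp [sum_eq_zero_iff.mp h0 i]
    rw [hx0, dotProduct_zero] at hx
    exact hpos.ne hx
  omega

/-- under the null space condition and pairwise distinct columns,
some one-hot collision set is trivial. -/
theorem stmt_7 {M N : ℕ} (hN : 0 < N)
    (Φ : Matrix (Fin M) (Fin N) ℝ)
    (hns : ∀ v : Fin N → ℝ, (∀ n, 0 ≤ v n) → Φ.mulVec v = 0 → v = 0)
    (hcols : ∀ n n' : Fin N, n ≠ n' → (fun m => Φ m n) ≠ (fun m => Φ m n')) :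
    ∃ j : Fin N, collisionSet Φ (Pi.single j 1) = {Pi.single j 1} := by
  obtain ⟨y, hy⟩ := Φ.exists_vecMul_pos hns
  obtain ⟨j, -, hj⟩ := univ.exists_min_image (y ᵥ* Φ) ⟨⟨0, hN⟩, mem_univ _⟩
  refine ⟨j, Set.eq_singleton_iff_unique_mem.mpr ⟨rfl, fun x hx => ?_⟩⟩
  replace hx : Φ *ᵥ (fun n => (x n : ℝ)) = Φ *ᵥ Pi.single j 1 := by
    rwa [← Pi.natCast_single_one]
  have hdot : (y ᵥ* Φ) ⬝ᵥ (fun n => (x n : ℝ)) = (y ᵥ* Φ) j := by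
    rw [← dotProduct_mulVec, hx, dotProduct_mulVec, dotProduct_single_one]
  obtain ⟨k, rfl⟩ := exists_eq_single_of_sum_eq_one
    (sum_eq_one_of_dotProduct_eq_min (hy j) (fun i => hj i (mem_univ i)) hdot)
  rw [Pi.natCast_single_one, mulVec_single_one, mulVec_single_one] at hx
  obtain rfl : k = j := by_contra fun hkj => hcols k j hkj hx
  rfl
end
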